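/- Let n ≥ 1, C > 0, λ† > 0, and β_max, φ_max > 0 satisfy either (φ_max < C/n) or (φ_max ≥ C/n and β_max ≤ λ†). Then for any parameters with 0 < β_i ≤ β_max, 0 < φ_i ≤ φ_max, any nonnegative equilibrium price λ* (i.e., λ* ≥ 0 such that there exist x*_i ≥ 0 maximizing min{β_i x, φ_i β_i} - λ* x over x ≥ 0 with ∑ x*_i = C) satisfies λ* ≤ λ†. -/

import Mathlib

/-!
If the price exceeded `λ†`, it would be positive, so no agent demands beyond its saturation
level `φ i ≤ φmax`; when `φmax < C / n` total demand then falls short of `C`. Otherwise every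
marginal utility `β i ≤ βmax ≤ λ†` lies strictly below the price, so every agent demands nothing.
Either way the market cannot clear.
-/

section OptimalDemand

variable {β φ lam x : ℝ}

theorem le_saturation_of_isOptimal (hφ : 0 ≤ φ) (hlam : 0 < lam)
    (hopt : ∀ y : ℝ, 0 ≤ y → min (β * y) (φ * β) - lam * y ≤ min (β * x) (φ * β) - lam * x) :
    x ≤ φ := by
  have hφopt := hopt φ hφ
  rw [mul_comm, min_self] at hφopt
  have hcap : min (β * x) (φ * β) ≤ φ * β := min_le_right _ _
  nlinarith

theorem eq_zero_of_isOptimal_of_lt (hβ : 0 ≤ β) (hφ : 0 ≤ φ) (hx : 0 ≤ x) (hβlam : β < lam)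
    (hopt : ∀ y : ℝ, 0 ≤ y → min (β * y) (φ * β) - lam * y ≤ min (β * x) (φ * β) - lam * x) :
    x = 0 := by
  have hzero := hopt 0 le_rfl
  rw [mul_zero, mul_zero, sub_zero, min_eq_left (mul_nonneg hφ hβ)] at hzero
  have hlin : min (β * x) (φ * β) ≤ β * x := min_le_left _ _
  nlinarith

end OptimalDemand

theorem stmt_8_general (n : ℕ) (hn : 1 ≤ n) (C lamd βmax φmax : ℝ)
    (hC : 0 < C) (hlamd : 0 < lamd)
    (hset : φmax < C / n ∨ (φmax ≥ C / n ∧ βmax ≤ lamd))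
    (β φ : Fin n → ℝ)
    (hβ : ∀ i, 0 < β i) (hβle : ∀ i, β i ≤ βmax)
    (hφ : ∀ i, 0 < φ i) (hφle : ∀ i, φ i ≤ φmax)
    (lam : ℝ)
    (heq : ∃ x : Fin n → ℝ, (∀ i, 0 ≤ x i) ∧
      (∀ i, ∀ y : ℝ, 0 ≤ y →
        min (β i * y) (φ i * β i) - lam * y ≤ min (β i * x i) (φ i * β i) - lam * x i) ∧
      ∑ i, x i = C) :
    lam ≤ lamd := by
  by_contra! hlt
  obtain ⟨x, hx, hopt, hsum⟩ := heq
  have hlam : 0 < lam := hlamd.trans hlt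
  rcases hset with hφC | ⟨-, hβlamd⟩
  · have hdemand : ∑ i, x i ≤ n * φmax := calc
      ∑ i, x i ≤ ∑ _i : Fin n, φmax := Finset.sum_le_sum fun i _ =>
        (le_saturation_of_isOptimal (hφ i).le hlam (hopt i)).trans (hφle i)
      _ = n * φmax := by simp
    have hn0 : (0 : ℝ) < n := by exact_mod_cast hn
    have hsupply : n * φmax < C := by rwa [lt_div_iff₀' hn0] at hφC
    linarith
  · have hzero (i : Fin n) : x i = 0 := eq_zero_of_isOptimal_of_lt (hβ i).le (hφ i).le (hx i)
      ((hβle i).trans_lt (hβlamd.trans_lt hlt)) (hopt i)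
    simp only [hzero, Finset.sum_const_zero] at hsum
    linarith

theorem stmt_8 (n : ℕ) (hn : 1 ≤ n) (C lamd βmax φmax : ℝ)
    (hC : 0 < C) (hlamd : 0 < lamd) (hβmax : 0 < βmax) (hφmax : 0 < φmax)
    (hset : φmax < C / n ∨ (φmax ≥ C / n ∧ βmax ≤ lamd))
    (β φ : Fin n → ℝ)
    (hβ : ∀ i, 0 < β i) (hβle : ∀ i, β i ≤ βmax)
    (hφ : ∀ i, 0 < φ i) (hφle : ∀ i, φ i ≤ φmax)
    (lam : ℝ) (hlam : 0 ≤ lam)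
    (heq : ∃ x : Fin n → ℝ, (∀ i, 0 ≤ x i) ∧
      (∀ i, ∀ y : ℝ, 0 ≤ y →
        min (β i * y) (φ i * β i) - lam * y ≤ min (β i * x i) (φ i * β i) - lam * x i) ∧
      ∑ i, x i = C) :
    lam ≤ lamd :=
  stmt_8_general n hn C lamd βmax φmax hC hlamd hset β φ hβ hβle hφ hφle lam heq
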